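/- arXiv:1403.3241 — 3 statements merged into one kernel-verified Lean document; each statement's English description precedes it below -/
import Mathlib

section
/- If G is a k-connected graph on s vertices (k ≥ 1), then the diameter of G is at most ⌊(s-2)/k⌋ + 1. -/
/-!
Let `u, v` realise the diameter `d`. For `0 < i < d` the sphere `{w | dist u w = i}` separates
`u` from `v`, since distances from `u` change by at most one along a walk; so each of these
`d - 1` disjoint spheres has at least `k` vertices. None of them contains `u` or `v`, whence
`(d - 1) k ≤ s - 2`.
-/

/-- A graph is `k`-connected if it has at least `k+1` vertices and (by Menger's theorem)
it cannot be disconnected by removing fewer than `k` vertices. -/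
def IsKConnected {V : Type*} [Fintype V] (G : SimpleGraph V) (k : ℕ) : Prop :=
  k + 1 ≤ Fintype.card V ∧
    ∀ s : Finset V, s.card < k → ((⊤ : G.Subgraph).deleteVerts ↑s).coe.Connected

open SimpleGraph Finset

theorem SimpleGraph.Walk.exists_mem_support_dist_eq {V : Type*} {G : SimpleGraph V} (u : V)
    {i : ℕ} {a b : V} (p : G.Walk a b) (ha : G.dist u a ≤ i) (hb : i ≤ G.dist u b) :
    ∃ x ∈ p.support, G.dist u x = i := by
  induction p with
  | nil => exact ⟨_, Walk.start_mem_support _, le_antisymm ha hb⟩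
  | @cons a c b hadj p ih =>
    rcases ha.eq_or_lt with ha | ha
    · exact ⟨a, Walk.start_mem_support _, ha⟩
    have hc : G.dist u c ≤ i := by
      have := hadj.reachable.dist_triangle_right u
      rw [dist_eq_one_iff_adj.mpr hadj] at this
      omega
    obtain ⟨x, hx, hxi⟩ := ih hc hb
    exact ⟨x, by simp [hx], hxi⟩

namespace IsKConnected

variable {V : Type*} [Fintype V] {G : SimpleGraph V} {k : ℕ}

theorem le_card_of_separates (h : IsKConnected G k) {s : Finset V} {u v : V} (hu : u ∉ s)
    (hv : v ∉ s) (hsep : ∀ p : G.Walk u v, ∃ x ∈ p.support, x ∈ s) : k ≤ #s := by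
  by_contra! hlt
  obtain ⟨p⟩ := h.2 s hlt ⟨u, by simp [hu]⟩ ⟨v, by simp [hv]⟩
  obtain ⟨x, hx, hxs⟩ : ∃ x ∈ (p.map (Subgraph.hom _)).support, x ∈ s := hsep _
  rw [Walk.support_map, List.mem_map] at hx
  obtain ⟨y, -, rfl⟩ := hx
  exact y.2.2 hxs

theorem le_card_sphere (h : IsKConnected G k) {u v : V} {i : ℕ} (hi : 0 < i)
    (hiv : i < G.dist u v) : k ≤ #{w | G.dist u w = i} := by
  refine h.le_card_of_separates (u := u) (v := v) (by simp [hi.ne]) (by simp [hiv.ne'])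
    fun p => ?_
  obtain ⟨x, hx, hxi⟩ := p.exists_mem_support_dist_eq u (by simp) hiv.le
  exact ⟨x, hx, by simpa using hxi⟩

theorem dist_sub_one_mul_le (h : IsKConnected G k) (u v : V) :
    (G.dist u v - 1) * k ≤ Fintype.card V - 2 := by
  classical
  rcases eq_or_ne u v with rfl | huv
  · simp
  set d := G.dist u v
  have hsub : ({w | G.dist u w ∈ Ioo 0 d} : Finset V) ⊆ (univ.erase u).erase v := by
    intro w hw
    simp only [mem_filter, mem_univ, true_and, mem_Ioo, mem_erase, and_true] at hw ⊢
    exact ⟨by rintro rfl; exact hw.2.ne rfl, by rintro rfl; simp at hw⟩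
  calc (d - 1) * k = ∑ _i ∈ Ioo 0 d, k := by simp
    _ ≤ ∑ i ∈ Ioo 0 d, #{w | G.dist u w = i} :=
        sum_le_sum fun i hi => h.le_card_sphere (mem_Ioo.mp hi).1 (mem_Ioo.mp hi).2
    _ = #{w | G.dist u w ∈ Ioo 0 d} := sum_card_fiberwise_eq_card_filter _ _ _
    _ ≤ #((univ.erase u).erase v) := card_le_card hsub
    _ = Fintype.card V - 2 := by
        rw [card_erase_of_mem (by simp [huv.symm]), card_erase_of_mem (mem_univ u), card_univ]
        omega

end IsKConnected

/-- If `G` is a `k`-connected graph on `s` vertices (`k ≥ 1`), then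
`diam G ≤ ⌊(s-2)/k⌋ + 1`. -/
theorem diam_le_of_isKConnected {V : Type*} [Fintype V] (G : SimpleGraph V) (k : ℕ)
    (hk : 1 ≤ k) (h : IsKConnected G k) :
    G.diam ≤ (Fintype.card V - 2) / k + 1 := by
  have : Nonempty V := Fintype.card_pos_iff.mp (by linarith [h.1])
  obtain ⟨u, v, huv⟩ := G.exists_dist_eq_diam
  have := (Nat.le_div_iff_mul_le hk).mpr (h.dist_sub_one_mul_le u v)
  omega
end

section
/- The graph G on vertex set {1,2,3,4,5,6} with edges {12, 13, 14, 15, 16, 23, 24, 26, 35, 36, 45, 46, 56} (the complete graph K_6 minus the two disjoint edges 25 and 34) is not the dual graph of any arrangement of projective lines in which each pair of intersecting lines meets in a point. -/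
open Module
section Aux_nd
open Submodule

variable {K V : Type*} [Field K] [AddCommGroup V] [Module K V]

lemma aux_indep {A B : Submodule K V} (hAB : A ⊓ B = ⊥) {p q : V}
    (hpA : p ∈ A) (hqB : q ∈ B) (hp : p ≠ 0) (hq : q ≠ 0) :
    LinearIndependent K ![p, q] := by
  rw [LinearIndependent.pair_iff]
  intro s t hst
  have h1 : s • p = -(t • q) := by
    rw [← sub_eq_zero]; rw [sub_neg_eq_add]; exact hst
  have hmem : s • p ∈ A ⊓ B := ⟨A.smul_mem s hpA, by rw [h1]; exact B.neg_mem (B.smul_mem t hqB)⟩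
  rw [hAB, Submodule.mem_bot] at hmem
  have hs : s = 0 := by
    rcases smul_eq_zero.mp hmem with h | h
    · exact h
    · exact absurd h hp
  have ht : t = 0 := by
    rw [hmem] at h1
    have : t • q = 0 := by rw [← neg_eq_zero, ← h1]
    rcases smul_eq_zero.mp this with h | h
    · exact h
    · exact absurd h hq
  exact ⟨hs, ht⟩

lemma aux_transversal [FiniteDimensional K V] {A B P : Submodule K V}
    (hAB : A ⊓ B = ⊥) (hP : finrank K P = 2) (hPA : P ⊓ A ≠ ⊥) (hPB : P ⊓ B ≠ ⊥) :
    ∃ a b : V, a ∈ A ∧ b ∈ B ∧ a ≠ 0 ∧ b ≠ 0 ∧ P = span K {a, b} := by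
  obtain ⟨a, haPA, ha0⟩ := (Submodule.ne_bot_iff _).mp hPA
  obtain ⟨b, hbPB, hb0⟩ := (Submodule.ne_bot_iff _).mp hPB
  refine ⟨a, b, haPA.2, hbPB.2, ha0, hb0, ?_⟩
  have hindep : LinearIndependent K ![a, b] := aux_indep hAB haPA.2 hbPB.2 ha0 hb0
  have hrange : Set.range ![a, b] = {a, b} := by
    simp only [Matrix.range_cons, Matrix.range_empty, Set.union_empty,
      Set.union_singleton]
    exact Set.pair_comm b a
  have hspan : finrank K (span K ({a, b} : Set V)) = 2 := by
    rw [← hrange, finrank_span_eq_card hindep]; simp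
  have hle : span K ({a, b} : Set V) ≤ P := by
    rw [Submodule.span_le, Set.insert_subset_iff, Set.singleton_subset_iff]
    exact ⟨haPA.1, hbPB.1⟩
  exact (Submodule.eq_of_le_of_finrank_le hle (by rw [hP, hspan])).symm

lemma aux_meet_iff {A B : Submodule K V} (hAB : A ⊓ B = ⊥) {a b c d : V}
    (haA : a ∈ A) (hcA : c ∈ A) (hbB : b ∈ B) (hdB : d ∈ B)
    (ha : a ≠ 0) (hb : b ≠ 0) (hc : c ≠ 0) (hd : d ≠ 0) :
    (span K {a, b} ⊓ span K {c, d} ≠ ⊥) ↔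
      ((∃ t : K, c = t • a) ∨ (∃ t : K, d = t • b)) := by
  constructor
  · intro h
    obtain ⟨x, ⟨hx1, hx2⟩, hx0⟩ := (Submodule.ne_bot_iff _).mp h
    obtain ⟨α, β, hαβ⟩ := Submodule.mem_span_pair.mp hx1
    obtain ⟨γ, δ, hγδ⟩ := Submodule.mem_span_pair.mp hx2
    have key : α • a - γ • c = δ • d - β • b := by
      rw [sub_eq_sub_iff_add_eq_add]
      rw [hαβ, ← hγδ]; exact add_comm _ _
    have hmem : α • a - γ • c ∈ A ⊓ B := by
      refine ⟨sub_mem (A.smul_mem _ haA) (A.smul_mem _ hcA), ?_⟩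
      rw [key]; exact sub_mem (B.smul_mem _ hdB) (B.smul_mem _ hbB)
    rw [hAB, Submodule.mem_bot] at hmem
    have h1 : α • a = γ • c := sub_eq_zero.mp hmem
    have h2 : δ • d = β • b := sub_eq_zero.mp (by rw [← key]; exact hmem)
    by_cases hα : α = 0
    · have hβ : β ≠ 0 := by
        intro hβ; apply hx0; rw [← hαβ, hα, hβ, zero_smul, zero_smul, add_zero]
      have hδ : δ ≠ 0 := by
        intro hδ
        rw [hδ, zero_smul] at h2
        exact hb (by rcases smul_eq_zero.mp h2.symm with h | h; exacts [absurd h hβ, h])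
      refine Or.inr ⟨δ⁻¹ * β, ?_⟩
      rw [mul_smul, ← h2, ← mul_smul, inv_mul_cancel₀ hδ, one_smul]
    · have hγ : γ ≠ 0 := by
        intro hγ
        rw [hγ, zero_smul] at h1
        exact ha (by rcases smul_eq_zero.mp h1 with h | h; exacts [absurd h hα, h])
      refine Or.inl ⟨γ⁻¹ * α, ?_⟩
      rw [mul_smul, h1, ← mul_smul, inv_mul_cancel₀ hγ, one_smul]
  · rintro (⟨t, rfl⟩ | ⟨t, rfl⟩)
    · refine (Submodule.ne_bot_iff _).mpr ⟨t • a, ⟨?_, ?_⟩, hc⟩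
      · exact Submodule.smul_mem _ t (Submodule.subset_span (Set.mem_insert a _))
      · exact Submodule.subset_span (Set.mem_insert _ _)
    · refine (Submodule.ne_bot_iff _).mpr ⟨t • b, ⟨?_, ?_⟩, hd⟩
      · exact Submodule.smul_mem _ t (Submodule.subset_span (Set.mem_insert_of_mem _ rfl))
      · exact Submodule.subset_span (Set.mem_insert_of_mem _ rfl)

lemma aux_span_pair_eq {a b c d : V} (h1 : ∃ t : K, c = t • a) (h2 : ∃ t : K, d = t • b)
    (hc : c ≠ 0) (hd : d ≠ 0) :
    span K ({c, d} : Set V) = span K ({a, b} : Set V) := by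
  obtain ⟨s, rfl⟩ := h1
  obtain ⟨t, rfl⟩ := h2
  have hs : IsUnit s := isUnit_iff_ne_zero.mpr (fun h => hc (by rw [h, zero_smul]))
  have ht : IsUnit t := isUnit_iff_ne_zero.mpr (fun h => hd (by rw [h, zero_smul]))
  rw [show ({s • a, t • b} : Set V) = insert (s • a) {t • b} from rfl,
    show ({a, b} : Set V) = insert a {b} from rfl,
    Submodule.span_insert, Submodule.span_insert,
    Submodule.span_singleton_smul_eq hs, Submodule.span_singleton_smul_eq ht]

lemma aux_par_symm {a c : V} (hc : c ≠ 0) (h : ∃ t : K, c = t • a) : ∃ t : K, a = t • c := by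
  obtain ⟨t, rfl⟩ := h
  have ht : t ≠ 0 := fun h => hc (by rw [h, zero_smul])
  exact ⟨t⁻¹, by rw [← mul_smul, inv_mul_cancel₀ ht, one_smul]⟩


end Aux_nd

/-- The adjacency relation of the graph `K_6` minus the two disjoint edges `25` and `34`
(vertices labelled `0,…,5`, so the missing edges are `{1,4}` and `{2,3}`). -/
def K6MinusTwoAdj (i j : Fin 6) : Prop :=
  i ≠ j ∧ ¬(({i, j} : Finset (Fin 6)) = {1, 4} ∨ ({i, j} : Finset (Fin 6)) = {2, 3})

/-- The graph `K_6` minus two disjoint edges is not the dual graph of any arrangement of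
six distinct projective lines (over an algebraically closed field), where two lines are
adjacent in the dual graph iff they intersect.  Lines in `ℙ^N` are modelled as
2-dimensional linear subspaces of `K^{N+1}`; two distinct lines intersect (in a point)
iff the corresponding subspaces meet nontrivially. -/
theorem not_dual_graph_of_line_arrangement
    (K : Type*) [Field K] [IsAlgClosed K] (N : ℕ)
    (L : Fin 6 → Submodule K (Fin (N + 1) → K))
    (hdim : ∀ i, finrank K (L i) = 2) (hinj : Function.Injective L) :
    ¬ (∀ i j : Fin 6, i ≠ j → ((L i ⊓ L j ≠ ⊥) ↔ K6MinusTwoAdj i j)) := by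
  intro H
  have h14 : L 1 ⊓ L 4 = ⊥ := by
    by_contra h
    exact ((H 1 4 (by decide)).1 h).2 (Or.inl rfl)
  have h23 : L 2 ⊓ L 3 = ⊥ := by
    by_contra h
    exact ((H 2 3 (by decide)).1 h).2 (Or.inr rfl)
  have adj : ∀ i j : Fin 6, i ≠ j → ¬(({i, j} : Finset (Fin 6)) = {1, 4}) →
      ¬(({i, j} : Finset (Fin 6)) = {2, 3}) → L i ⊓ L j ≠ ⊥ := by
    intro i j hne h1 h2
    exact (H i j hne).2 ⟨hne, by rintro (h | h); exacts [h1 h, h2 h]⟩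
  have h01 := adj 0 1 (by decide) (by decide) (by decide)
  have h04 := adj 0 4 (by decide) (by decide) (by decide)
  have h21 := adj 2 1 (by decide) (by decide) (by decide)
  have h24 := adj 2 4 (by decide) (by decide) (by decide)
  have h31 := adj 3 1 (by decide) (by decide) (by decide)
  have h34 := adj 3 4 (by decide) (by decide) (by decide)
  have h51 := adj 5 1 (by decide) (by decide) (by decide)
  have h54 := adj 5 4 (by decide) (by decide) (by decide)
  have h02 := adj 0 2 (by decide) (by decide) (by decide)
  have h03 := adj 0 3 (by decide) (by decide) (by decide)
  have h52 := adj 5 2 (by decide) (by decide) (by decide)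
  have h53 := adj 5 3 (by decide) (by decide) (by decide)
  have h05 := adj 0 5 (by decide) (by decide) (by decide)
  obtain ⟨a0, b0, ha0A, hb0B, ha0, hb0, hL0⟩ := aux_transversal h14 (hdim 0) h01 h04
  obtain ⟨a2, b2, ha2A, hb2B, ha2, hb2, hL2⟩ := aux_transversal h14 (hdim 2) h21 h24
  obtain ⟨a3, b3, ha3A, hb3B, ha3, hb3, hL3⟩ := aux_transversal h14 (hdim 3) h31 h34
  obtain ⟨a5, b5, ha5A, hb5B, ha5, hb5, hL5⟩ := aux_transversal h14 (hdim 5) h51 h54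
  have ptrans : ∀ (x y z : Fin (N + 1) → K),
      (∃ t : K, y = t • x) → (∃ t : K, z = t • y) → (∃ t : K, z = t • x) := by
    rintro x y z ⟨t, rfl⟩ ⟨s, rfl⟩
    exact ⟨s * t, (mul_smul s t x).symm⟩
  have F23 : ¬((∃ t : K, a3 = t • a2) ∨ (∃ t : K, b3 = t • b2)) := by
    rw [← aux_meet_iff h14 ha2A ha3A hb2B hb3B ha2 hb2 ha3 hb3, ← hL2, ← hL3]
    exact not_not.mpr h23
  rw [not_or] at F23
  obtain ⟨F23a, F23b⟩ := F23
  have F02 := (aux_meet_iff h14 ha0A ha2A hb0B hb2B ha0 hb0 ha2 hb2).1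
    (by rw [← hL0, ← hL2]; exact h02)
  have F03 := (aux_meet_iff h14 ha0A ha3A hb0B hb3B ha0 hb0 ha3 hb3).1
    (by rw [← hL0, ← hL3]; exact h03)
  have F52 := (aux_meet_iff h14 ha5A ha2A hb5B hb2B ha5 hb5 ha2 hb2).1
    (by rw [← hL5, ← hL2]; exact h52)
  have F53 := (aux_meet_iff h14 ha5A ha3A hb5B hb3B ha5 hb5 ha3 hb3).1
    (by rw [← hL5, ← hL3]; exact h53)
  have F05 := (aux_meet_iff h14 ha0A ha5A hb0B hb5B ha0 hb0 ha5 hb5).1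
    (by rw [← hL0, ← hL5]; exact h05)
  have G0 : ((∃ t : K, a2 = t • a0) ∧ (∃ t : K, b3 = t • b0)) ∨
      ((∃ t : K, a3 = t • a0) ∧ (∃ t : K, b2 = t • b0)) := by
    rcases F02 with h | h
    · rcases F03 with h' | h'
      · exact absurd (ptrans a2 a0 a3 (aux_par_symm ha2 h) h') F23a
      · exact Or.inl ⟨h, h'⟩
    · rcases F03 with h' | h'
      · exact Or.inr ⟨h', h⟩
      · exact absurd (ptrans b2 b0 b3 (aux_par_symm hb2 h) h') F23b
  have G5 : ((∃ t : K, a2 = t • a5) ∧ (∃ t : K, b3 = t • b5)) ∨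
      ((∃ t : K, a3 = t • a5) ∧ (∃ t : K, b2 = t • b5)) := by
    rcases F52 with h | h
    · rcases F53 with h' | h'
      · exact absurd (ptrans a2 a5 a3 (aux_par_symm ha2 h) h') F23a
      · exact Or.inl ⟨h, h'⟩
    · rcases F53 with h' | h'
      · exact Or.inr ⟨h', h⟩
      · exact absurd (ptrans b2 b5 b3 (aux_par_symm hb2 h) h') F23b
  rcases G0 with ⟨h02a, h03b⟩ | ⟨h03a, h02b⟩ <;> rcases G5 with ⟨h52a, h53b⟩ | ⟨h53a, h52b⟩
  · -- L 0 = L 5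
    have hpa : ∃ t : K, a5 = t • a0 := ptrans a0 a2 a5 h02a (aux_par_symm ha2 h52a)
    have hpb : ∃ t : K, b5 = t • b0 := ptrans b0 b3 b5 h03b (aux_par_symm hb3 h53b)
    have : L 0 = L 5 := by
      rw [hL0, hL5]
      exact (aux_span_pair_eq hpa hpb ha5 hb5).symm
    exact absurd (hinj this) (by decide)
  · rcases F05 with h | h
    · exact absurd (ptrans a2 a0 a3 (aux_par_symm ha2 h02a) (ptrans a0 a5 a3 h h53a)) F23a
    · exact absurd (ptrans b2 b0 b3 (aux_par_symm hb2 (ptrans b0 b5 b2 h h52b)) h03b) F23b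
  · rcases F05 with h | h
    · exact absurd (ptrans a2 a0 a3 (aux_par_symm ha2 (ptrans a0 a5 a2 h h52a)) h03a) F23a
    · exact absurd (ptrans b2 b0 b3 (aux_par_symm hb2 h02b) (ptrans b0 b5 b3 h h53b)) F23b
  · have hpa : ∃ t : K, a5 = t • a0 := ptrans a0 a3 a5 h03a (aux_par_symm ha3 h53a)
    have hpb : ∃ t : K, b5 = t • b0 := ptrans b0 b2 b5 h02b (aux_par_symm hb2 h52b)
    have : L 0 = L 5 := by
      rw [hL0, hL5]
      exact (aux_span_pair_eq hpa hpb ha5 hb5).symm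
    exact absurd (hinj this) (by decide)
end

section
/- The hypercube graph Q_r ({0,1}^r with edges between vectors differing in exactly one coordinate) is r-connected but not (r+1)-connected. -/
/-- The hypercube graph `Q_r`: vertices are `{0,1}^r`, with edges between vectors
differing in exactly one coordinate. -/
def cubeGraph (r : ℕ) : SimpleGraph (Fin r → Bool) :=
  SimpleGraph.fromRel
    (fun x y => (Finset.univ.filter fun i => x i ≠ y i).card = 1)

/-!
A `k`-connected graph has minimum degree at least `k`: deleting the neighbours of a vertex of
smaller degree either isolates it or leaves at most `k` vertices. As `Q_r` is `r`-regular, it is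
not `(r+1)`-connected.

For `r`-connectivity, induct on `r`. `Q_{r+1}` consists of two copies of `Q_r` (the slices by the
last coordinate) joined by the perfect matching `(w,0) – (w,1)`. A set `s` of at most `r` vertices
meets the two slices in sets of total size at most `r`. If both have size `< r`, both slices stay
connected, and since `2^r > r` some matching edge avoids `s` and joins them. Otherwise `s` lies
in one slice, the other slice is intact, and every surviving vertex is matched into it.
-/

open Finset

namespace SimpleGraph

variable {V V' : Type*} {G : SimpleGraph V} {G' : SimpleGraph V'}

/- Reachability in `G - s` is argued in the spanning graph
`((⊤ : G.Subgraph).deleteVerts s).spanningCoe` on all of `V`, avoiding subtypes. -/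
theorem Subgraph.reachable_coe_of_reachable_spanningCoe {H : G.Subgraph} {a b : V}
    (h : H.spanningCoe.Reachable a b) (ha : a ∈ H.verts) (hb : b ∈ H.verts) :
    H.coe.Reachable ⟨a, ha⟩ ⟨b, hb⟩ := by
  rw [reachable_iff_reflTransGen] at h
  induction h with
  | refl => rfl
  | @tail c d _ hcd ih => exact (ih (H.edge_vert hcd)).trans (Adj.reachable hcd)

theorem Subgraph.connected_coe_of_reachable_spanningCoe {H : G.Subgraph}
    (hne : H.verts.Nonempty) (h : ∀ a ∈ H.verts, ∀ b ∈ H.verts, H.spanningCoe.Reachable a b) :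
    H.coe.Connected := by
  rw [connected_iff]
  exact ⟨fun ⟨a, ha⟩ ⟨b, hb⟩ => reachable_coe_of_reachable_spanningCoe (h a ha b hb) ha hb,
    hne.to_subtype⟩

theorem spanningCoe_deleteVerts_top_adj {s : Set V} {a b : V} :
    ((⊤ : G.Subgraph).deleteVerts s).spanningCoe.Adj a b ↔ G.Adj a b ∧ a ∉ s ∧ b ∉ s := by
  simp only [Subgraph.spanningCoe_adj, Subgraph.deleteVerts_adj, Subgraph.verts_top,
    Subgraph.top_adj, Set.mem_univ, true_and]
  tauto

theorem Reachable.map_deleteVerts (f : G →g G') {s : Set V'} {a b : V}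
    (h : ((⊤ : G.Subgraph).deleteVerts (f ⁻¹' s)).spanningCoe.Reachable a b) :
    ((⊤ : G'.Subgraph).deleteVerts s).spanningCoe.Reachable (f a) (f b) :=
  h.map ⟨f, fun hab => by
    rw [spanningCoe_deleteVerts_top_adj] at hab ⊢
    exact ⟨f.map_adj hab.1, hab.2⟩⟩

end SimpleGraph

theorem IsKConnected.le_degree {V : Type*} [Fintype V] {G : SimpleGraph V} {k : ℕ}
    (h : IsKConnected G k) (v : V) [Fintype (G.neighborSet v)] : k ≤ G.degree v := by
  classical
  by_contra! hlt
  set s := G.neighborFinset v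
  by_cases hw : ∃ w, w ≠ v ∧ w ∉ s
  · obtain ⟨w, hwv, hws⟩ := hw
    have hv : v ∈ ((⊤ : G.Subgraph).deleteVerts ↑s).verts := by simp [s]
    have : Nontrivial ((⊤ : G.Subgraph).deleteVerts ↑s).verts :=
      ⟨⟨v, hv⟩, ⟨w, by simpa using hws⟩, by simpa using hwv.symm⟩
    obtain ⟨u, hu⟩ := (SimpleGraph.Subgraph.preconnected_iff.mpr
      (h.2 s hlt).preconnected).exists_adj_of_nontrivial ⟨v, hv⟩
    -- `u` would be a neighbour of `v` outside the neighbourhood `s`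
    simp [s] at hu
  · push Not at hw
    have hcover : univ ⊆ insert v s := fun w _ => by
      by_cases hwv : w = v <;> simp [hwv, hw]
    have := calc k + 1 ≤ Fintype.card V := h.1
      _ = #(univ : Finset V) := card_univ.symm
      _ ≤ #(insert v s) := card_le_card hcover
      _ ≤ #s + 1 := card_insert_le v s
    rw [SimpleGraph.card_neighborFinset_eq_degree] at this
    omega

theorem hammingDist_snoc {n : ℕ} {β : Type*} [DecidableEq β] (u v : Fin n → β) (b c : β) :
    hammingDist (Fin.snoc u b : Fin (n + 1) → β) (Fin.snoc v c) =
      hammingDist u v + if b = c then 0 else 1 := by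
  simp only [hammingDist, card_filter, Fin.sum_univ_castSucc, Fin.snoc_castSucc, Fin.snoc_last]
  simp

theorem cubeGraph_adj {r : ℕ} {x y : Fin r → Bool} :
    (cubeGraph r).Adj x y ↔ hammingDist x y = 1 := by
  rw [cubeGraph, SimpleGraph.fromRel_adj, ← hammingDist_ne_zero]
  change _ ∧ (hammingDist x y = 1 ∨ hammingDist y x = 1) ↔ _
  rw [hammingDist_comm y x, or_self]
  exact ⟨And.right, fun h => ⟨by omega, h⟩⟩

instance (r : ℕ) : DecidableRel (cubeGraph r).Adj :=
  fun _ _ => decidable_of_iff' _ cubeGraph_adj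

theorem cubeGraph_adj_iff_exists_update {r : ℕ} {x y : Fin r → Bool} :
    (cubeGraph r).Adj x y ↔ ∃ i, Function.update x i (!x i) = y := by
  rw [cubeGraph_adj, hammingDist, card_eq_one]
  refine exists_congr fun i => ?_
  rw [Finset.ext_iff, funext_iff]
  refine forall_congr' fun j => ?_
  by_cases hji : j = i
  · subst hji
    cases hx : x j <;> cases hy : y j <;> simp [hx, hy]
  · simp [hji]

theorem cubeGraph_degree {r : ℕ} (x : Fin r → Bool) : (cubeGraph r).degree x = r := by
  have hneighbors : (cubeGraph r).neighborFinset x =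
      univ.image fun i => Function.update x i (!x i) := by
    ext y
    simp [cubeGraph_adj_iff_exists_update]
  have hinj : Function.Injective fun i => Function.update x i (!x i) := fun i j hij => by
    by_contra hne
    simpa [Function.update_of_ne hne] using congrFun hij i
  rw [← SimpleGraph.card_neighborFinset_eq_degree, hneighbors, card_image_of_injective _ hinj,
    card_univ, Fintype.card_fin]

def cubeSnocHom (r : ℕ) (b : Bool) : cubeGraph r →g cubeGraph (r + 1) where
  toFun w := Fin.snoc w b
  map_rel' h := by
    rw [cubeGraph_adj, hammingDist_snoc, if_pos rfl, add_zero, ← cubeGraph_adj]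
    exact h

@[simp]
theorem cubeSnocHom_apply {r : ℕ} (b : Bool) (w : Fin r → Bool) :
    cubeSnocHom r b w = Fin.snoc w b :=
  rfl

theorem cubeSnocHom_injective (r : ℕ) (b : Bool) : Function.Injective (cubeSnocHom r b) :=
  fun u v h => by simpa using congrArg Fin.init h

theorem mem_range_cubeSnocHom {r : ℕ} {b : Bool} {z : Fin (r + 1) → Bool} :
    z ∈ Set.range (cubeSnocHom r b) ↔ z (Fin.last r) = b := by
  constructor
  · rintro ⟨w, rfl⟩
    simp
  · rintro rfl
    exact ⟨Fin.init z, Fin.snoc_init_self z⟩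

theorem cubeGraph_adj_snoc_not {r : ℕ} (u : Fin r → Bool) (b : Bool) :
    (cubeGraph (r + 1)).Adj (Fin.snoc u b) (Fin.snoc u (!b)) := by
  rw [cubeGraph_adj, hammingDist_snoc]
  simp

abbrev cubeDelete (r : ℕ) (s : Finset (Fin r → Bool)) : SimpleGraph (Fin r → Bool) :=
  ((⊤ : (cubeGraph r).Subgraph).deleteVerts ↑s).spanningCoe

noncomputable def cubeSlice {r : ℕ} (s : Finset (Fin (r + 1) → Bool)) (b : Bool) :
    Finset (Fin r → Bool) :=
  s.preimage (cubeSnocHom r b) (cubeSnocHom_injective r b).injOn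

theorem mem_cubeSlice {r : ℕ} {s : Finset (Fin (r + 1) → Bool)} {b : Bool} {w : Fin r → Bool} :
    w ∈ cubeSlice s b ↔ (Fin.snoc w b : Fin (r + 1) → Bool) ∈ s :=
  mem_preimage

theorem card_cubeSlice_add_card_cubeSlice_not {r : ℕ} (s : Finset (Fin (r + 1) → Bool))
    (b : Bool) : #(cubeSlice s b) + #(cubeSlice s !b) = #s := by
  classical
  rw [cubeSlice, cubeSlice, card_preimage, card_preimage]
  simp only [mem_range_cubeSnocHom]
  convert card_filter_add_card_filter_not (s := s) (fun z => z (Fin.last r) = b) using 3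
  exact filter_congr fun z _ => by cases b <;> simp

theorem reachable_snoc_of_reachable_cubeSlice {r : ℕ} {s : Finset (Fin (r + 1) → Bool)}
    {b : Bool} {u v : Fin r → Bool}
    (h : (cubeDelete r (cubeSlice s b)).Reachable u v) :
    (cubeDelete (r + 1) s).Reachable (Fin.snoc u b) (Fin.snoc v b) := by
  rw [cubeDelete, cubeSlice, coe_preimage] at h
  exact h.map_deleteVerts (cubeSnocHom r b)

theorem reachable_snoc_snoc {r : ℕ} {s : Finset (Fin (r + 1) → Bool)} {u : Fin r → Bool}
    {b c : Bool} (hb : (Fin.snoc u b : Fin (r + 1) → Bool) ∉ s)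
    (hc : (Fin.snoc u c : Fin (r + 1) → Bool) ∉ s) :
    (cubeDelete (r + 1) s).Reachable (Fin.snoc u b) (Fin.snoc u c) := by
  obtain rfl | rfl : c = b ∨ c = !b := by cases b <;> cases c <;> simp
  · rfl
  · exact SimpleGraph.Adj.reachable <|
      SimpleGraph.spanningCoe_deleteVerts_top_adj.mpr ⟨cubeGraph_adj_snoc_not u b, hb, hc⟩

theorem cubeGraph_reachable_deleteVerts {r : ℕ} {s : Finset (Fin r → Bool)} (hs : #s < r)
    {x y : Fin r → Bool} (hx : x ∉ s) (hy : y ∉ s) :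
    (cubeDelete r s).Reachable x y := by
  induction r with
  | zero => exact absurd hs (Nat.not_lt_zero _)
  | succ r ih =>
    suffices hub : ∃ h, ∀ w b, (Fin.snoc w b : Fin (r + 1) → Bool) ∉ s →
        (cubeDelete (r + 1) s).Reachable (Fin.snoc w b) h by
      obtain ⟨h, hh⟩ := hub
      have reach (z) (hz : z ∉ s) := Fin.snoc_init_self z ▸ hh (Fin.init z) (z (Fin.last r))
        (by rwa [Fin.snoc_init_self])
      exact (reach x hx).trans (reach y hy).symm
    by_cases hsmall : ∀ b, #(cubeSlice s b) < r
    · obtain ⟨u, -, hu⟩ := exists_mem_notMem_of_card_lt_card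
          (s := cubeSlice s false ∪ cubeSlice s true) (t := univ) <| calc
        #(cubeSlice s false ∪ cubeSlice s true) ≤ #s :=
          (card_union_le _ _).trans (card_cubeSlice_add_card_cubeSlice_not s false).le
        _ < 2 ^ r := (Nat.lt_succ_iff.mp hs).trans_lt r.lt_two_pow_self
        _ = #univ := by simp
      have hu' (b : Bool) : u ∉ cubeSlice s b := by cases b <;> simp_all
      refine ⟨Fin.snoc u false, fun w b hwb => ?_⟩
      have hw : w ∉ cubeSlice s b := by rwa [mem_cubeSlice]
      exact (reachable_snoc_of_reachable_cubeSlice (ih (hsmall b) hw (hu' b))).trans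
        (reachable_snoc_snoc (mem_cubeSlice.not.mp (hu' b)) (mem_cubeSlice.not.mp (hu' false)))
    · push Not at hsmall
      obtain ⟨b, hb⟩ := hsmall
      have hempty : cubeSlice s (!b) = ∅ := by
        have := card_cubeSlice_add_card_cubeSlice_not s b
        rw [← card_eq_zero]
        omega
      have hfree (w : Fin r → Bool) : (Fin.snoc w (!b) : Fin (r + 1) → Bool) ∉ s := by
        rw [← mem_cubeSlice, hempty]
        exact notMem_empty w
      let u : Fin r → Bool := fun _ => false
      refine ⟨Fin.snoc u (!b), fun w c hwc => (reachable_snoc_snoc hwc (hfree w)).trans ?_⟩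
      apply reachable_snoc_of_reachable_cubeSlice
      rcases Nat.eq_zero_or_pos r with rfl | hr
      · rw [Subsingleton.elim w u]
      · exact ih (by rw [hempty]; exact hr) (by simp [hempty]) (by simp [hempty])

/-- The hypercube graph `Q_r` is `r`-connected but not `(r+1)`-connected. -/
theorem cubeGraph_connectivity (r : ℕ) :
    IsKConnected (cubeGraph r) r ∧ ¬ IsKConnected (cubeGraph r) (r + 1) := by
  have hcard : r < Fintype.card (Fin r → Bool) := by simpa using r.lt_two_pow_self
  refine ⟨⟨hcard, fun s hs => ?_⟩, fun h => ?_⟩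
  · obtain ⟨x, -, hx⟩ := exists_mem_notMem_of_card_lt_card (s := s) (t := univ)
      (hs.trans (by rwa [card_univ]))
    exact SimpleGraph.Subgraph.connected_coe_of_reachable_spanningCoe ⟨x, by simpa⟩
      fun a ha b hb => cubeGraph_reachable_deleteVerts hs (by simpa using ha) (by simpa using hb)
  · have := IsKConnected.le_degree h (fun _ => false)
    rw [cubeGraph_degree] at this
    omega
end
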